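/- Let n ≥ 1, v = 4n+2, m = 2n+1, and for i ∈ {0,...,2n} set a_i = i and b_i = i + m in Fin v. For a 3-element subset {α0,α1,α2} of {0,...,2n} with α0 < α1 < α2, let 𝒯_{α0α1α2} = (a_{α0} a_{α1} a_{α2} ; b_{α0} b_{α1} b_{α2}) + (a_{α0} a_{α1} a_{α2} ; b_{α1} b_{α2} b_{α0}) - (a_{α0} a_{α1} a_{α2} ; b_{α2} b_{α0} b_{α1}). Then Σ over all 3-element subsets {α0,α1,α2} of {0,...,2n} of (-1)^(α0+α1+α2) · 𝒯_{α0α1α2} is a (2,3,4n+2)-halving. -/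

import Mathlib

/-- A `T(2,3,v)` trade: `f B = 0` unless `|B| = 3`, and every pair is balanced. -/
def isTrade (v : ℕ) (f : Finset (Fin v) → ℤ) : Prop :=
  (∀ B : Finset (Fin v), B.card ≠ 3 → f B = 0) ∧
  ∀ P : Finset (Fin v), P.card = 2 →
    ∑ B ∈ Finset.univ.filter (fun B : Finset (Fin v) => B.card = 3 ∧ P ⊆ B), f B = 0

/-- A trade is simple if every value lies in `{-1, 0, 1}`. -/
def isSimple (v : ℕ) (f : Finset (Fin v) → ℤ) : Prop :=
  ∀ B : Finset (Fin v), f B = -1 ∨ f B = 0 ∨ f B = 1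

/-- The volume of a trade: the sum of its positive entries. -/
def volume (v : ℕ) (f : Finset (Fin v) → ℤ) : ℤ :=
  ∑ B : Finset (Fin v), max (f B) 0

/-- A `(2,3,v)`-halving: a simple trade taking value `±1` on every 3-subset. -/
def isHalving (v : ℕ) (f : Finset (Fin v) → ℤ) : Prop :=
  isTrade v f ∧ isSimple v f ∧
    ∀ B : Finset (Fin v), B.card = 3 → f B = 1 ∨ f B = -1

/-- The minimal trade `(a₀ a₁ a₂ ; b₀ b₁ b₂)`: it sends each of the eight sets
`{c₀,c₁,c₂}` with `cᵢ ∈ {aᵢ, bᵢ}` to `(-1)^(#{i : cᵢ = bᵢ})` and all other sets to 0. -/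
def minimalTrade (v : ℕ) (a b : Fin 3 → Fin v) : Finset (Fin v) → ℤ :=
  fun B => ∑ s : Fin 3 → Bool,
    (-1 : ℤ) ^ (Finset.univ.filter (fun i => s i = true)).card *
      (if B = Finset.image (fun i => if s i then b i else a i) Finset.univ then 1 else 0)

/-- The directed-edge trade `E(i,j) = 1_{{aᵢ,bᵢ,aⱼ}} + 1_{{aᵢ,bᵢ,bⱼ}} - 1_{{aⱼ,bⱼ,aᵢ}} - 1_{{aⱼ,bⱼ,bᵢ}}`. -/
def edgeTrade (v : ℕ) {ι : Type*} (a b : ι → Fin v) (i j : ι) : Finset (Fin v) → ℤ :=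
  fun B => (if B = {a i, b i, a j} then 1 else 0) + (if B = {a i, b i, b j} then 1 else 0)
    - (if B = {a j, b j, a i} then 1 else 0) - (if B = {a j, b j, b i} then 1 else 0)

/-!
Write `pick a b i false = a i` and `pick a b i true = b i`; for `a i = i`, `b i = i + m` the map
`(i, x) ↦ pick a b i x` is a bijection `Fin m × Bool ≃ Fin v`.

Each summand `𝒯` lives on the six points of three pairs and is the image, under an injection
`Fin 6 ↪ Fin v`, of one fixed combination of minimal trades on `Fin 6`. Hence it is a trade, and
its values are read off a finite table. A 3-set meeting three distinct pairs `i, j, k` only sees the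
summand `{i, j, k}`, where the two shifted minimal trades cancel and the unshifted one gives `±1`.
A 3-set `{a j, b j, x}` with `x` in pair `k` gets `±(-1) ^ l` from each summand `{j, k, l}`, the
sign being the cyclic orientation of `j, k, l`; for odd `m` this alternating sum over `l` is `±1`.
-/

open Finset Function

section Trades

variable {k v : ℕ}

theorem isTrade_sum {ι : Type*} (S : Finset ι) (c : ι → ℤ) {f : ι → Finset (Fin v) → ℤ}
    (hf : ∀ i ∈ S, isTrade v (f i)) : isTrade v (fun B => ∑ i ∈ S, c i * f i B) := by
  refine ⟨fun B hB => sum_eq_zero fun i hi => by rw [(hf i hi).1 B hB, mul_zero], fun P hP => ?_⟩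
  rw [sum_comm]
  exact sum_eq_zero fun i hi => by rw [← mul_sum, (hf i hi).2 P hP, mul_zero]

theorem isTrade_of_apply_map (φ : Fin k ↪ Fin v) {f : Finset (Fin k) → ℤ}
    {g : Finset (Fin v) → ℤ} (hf : isTrade k f) (hg : ∀ C, g (C.map φ) = f C)
    (hg₀ : ∀ B, B ∉ Set.range (map φ) → g B = 0) : isTrade v g := by
  refine ⟨fun B hB => ?_, fun P hP => ?_⟩
  · by_cases hBφ : B ∈ Set.range (map φ)
    · obtain ⟨C, rfl⟩ := hBφ
      rw [hg]
      exact hf.1 C (by rwa [card_map] at hB)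
    · exact hg₀ B hBφ
  set S := univ.filter fun C : Finset (Fin k) => #C = 3 ∧ P ⊆ C.map φ
  have hS : S.map (mapEmbedding φ).toEmbedding ⊆ univ.filter fun B => #B = 3 ∧ P ⊆ B := by
    intro B hB
    obtain ⟨C, hC, rfl⟩ := mem_map.mp hB
    simpa [S] using hC
  rw [← sum_subset hS fun B hB hBS => hg₀ B ?_, sum_map]
  · simp only [RelEmbedding.coe_toEmbedding, mapEmbedding_apply, hg]
    by_cases hPφ : P ∈ Set.range (map φ)
    · obtain ⟨P', rfl⟩ := hPφ
      simp only [S, map_subset_map]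
      exact hf.2 P' (by rwa [card_map] at hP)
    · refine sum_eq_zero fun C hC => absurd ?_ hPφ
      obtain ⟨u, -, hu⟩ := subset_map_iff.mp (mem_filter.mp hC).2.2
      exact ⟨u, hu.symm⟩
  · rintro ⟨C, rfl⟩
    exact hBS (mem_map_of_mem _ (by simpa [S] using hB))

end Trades

def pick {ι α : Type*} (a b : ι → α) (i : ι) (x : Bool) : α := if x then b i else a i

section MinimalTrade

variable {k v : ℕ}

theorem image_minimalTrade_comp (φ : Fin k ↪ Fin v) (a b : Fin 3 → Fin k) (s : Fin 3 → Bool) :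
    image (fun i => if s i then (φ ∘ b) i else (φ ∘ a) i) univ =
      (image (fun i => if s i then b i else a i) univ).map φ := by
  rw [map_eq_image, image_image]
  congr 1
  funext i
  simp only [comp_apply, apply_ite φ]

theorem minimalTrade_comp_apply_map (φ : Fin k ↪ Fin v) (a b : Fin 3 → Fin k)
    (C : Finset (Fin k)) : minimalTrade v (φ ∘ a) (φ ∘ b) (C.map φ) = minimalTrade k a b C := by
  refine sum_congr rfl fun s _ => ?_
  simp only [image_minimalTrade_comp, (map_injective φ).eq_iff]

theorem minimalTrade_comp_of_notMem_range (φ : Fin k ↪ Fin v) (a b : Fin 3 → Fin k)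
    {B : Finset (Fin v)} (hB : B ∉ Set.range (map φ)) : minimalTrade v (φ ∘ a) (φ ∘ b) B = 0 := by
  refine sum_eq_zero fun s _ => ?_
  rw [if_neg, mul_zero]
  rintro rfl
  exact hB ⟨_, (image_minimalTrade_comp φ a b s).symm⟩

end MinimalTrade

/-- The paper's `𝒯_{α₀α₁α₂}`, written for the three pairs `{a t, b t} = {a_{αₜ}, b_{αₜ}}`. -/
def cycTrade {v : ℕ} (a b : Fin 3 → Fin v) (B : Finset (Fin v)) : ℤ :=
  minimalTrade v a b B + minimalTrade v a (fun t => b (t + 1)) B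
    - minimalTrade v a (fun t => b (t + 2)) B

section CycTrade

variable {k v : ℕ}

theorem cycTrade_comp_apply_map (φ : Fin k ↪ Fin v) (a b : Fin 3 → Fin k) (C : Finset (Fin k)) :
    cycTrade (φ ∘ a) (φ ∘ b) (C.map φ) = cycTrade a b C := by
  rw [cycTrade, cycTrade, ← minimalTrade_comp_apply_map φ a b,
    ← minimalTrade_comp_apply_map φ a (fun t => b (t + 1)),
    ← minimalTrade_comp_apply_map φ a (fun t => b (t + 2))]
  rfl

theorem cycTrade_comp_of_notMem_range (φ : Fin k ↪ Fin v) (a b : Fin 3 → Fin k)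
    {B : Finset (Fin v)} (hB : B ∉ Set.range (map φ)) : cycTrade (φ ∘ a) (φ ∘ b) B = 0 := by
  change minimalTrade v _ (φ ∘ b) B + minimalTrade v _ (φ ∘ fun t => b (t + 1)) B
    - minimalTrade v _ (φ ∘ fun t => b (t + 2)) B = 0
  simp only [minimalTrade_comp_of_notMem_range φ _ _ hB, add_zero, sub_zero]

end CycTrade

def ltSign {α : Type*} [LinearOrder α] (x y : α) : ℤ := if x < y then 1 else -1

theorem StrictMono.ltSign_eq {α β : Type*} [LinearOrder α] [LinearOrder β] {f : α → β}
    (hf : StrictMono f) (x y : α) : ltSign (f x) (f y) = ltSign x y := by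
  simp only [ltSign, hf.lt_iff_lt]

-- The model: the pairs `{t, t + 3}` of `Fin 6`.

theorem isTrade_cycTrade_castAdd_natAdd : isTrade 6 (cycTrade (Fin.castAdd 3) (Fin.natAdd 3)) := by
  unfold isTrade
  decide

theorem cycTrade_castAdd_natAdd_transversal :
    ∀ u w p : Fin 3, u ≠ w → u ≠ p → w ≠ p → ∀ x y z : Bool,
      cycTrade (Fin.castAdd 3) (Fin.natAdd 3) {pick (Fin.castAdd 3) (Fin.natAdd 3) u x,
        pick (Fin.castAdd 3) (Fin.natAdd 3) w y, pick (Fin.castAdd 3) (Fin.natAdd 3) p z} = 1 ∨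
      cycTrade (Fin.castAdd 3) (Fin.natAdd 3) {pick (Fin.castAdd 3) (Fin.natAdd 3) u x,
        pick (Fin.castAdd 3) (Fin.natAdd 3) w y, pick (Fin.castAdd 3) (Fin.natAdd 3) p z} = -1 := by
  decide

theorem cycTrade_castAdd_natAdd_pair :
    ∀ u w p : Fin 3, u ≠ w → u ≠ p → w ≠ p → ∀ z : Bool,
      cycTrade (Fin.castAdd 3) (Fin.natAdd 3)
        {pick (Fin.castAdd 3) (Fin.natAdd 3) u false, pick (Fin.castAdd 3) (Fin.natAdd 3) u true,
          pick (Fin.castAdd 3) (Fin.natAdd 3) w z} =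
      -(ltSign u w * ltSign u p * ltSign w p) := by
  decide

theorem exists_pick_castAdd_natAdd_eq :
    ∀ i : Fin 6, ∃ t x, pick (Fin.castAdd 3) (Fin.natAdd 3) t x = i := by
  decide

section SixPoints

variable {v : ℕ} {a b : Fin 3 → Fin v}

theorem injective_append_of_injective_pick (h : Injective (uncurry (pick a b))) :
    Injective (Fin.append a b) :=
  Fin.append_injective_iff.2
    ⟨fun i j hij => congrArg Prod.fst (@h (i, false) (j, false) hij),
      fun i j hij => congrArg Prod.fst (@h (i, true) (j, true) hij),
      fun i j hij => Bool.false_ne_true (congrArg Prod.snd (@h (i, false) (j, true) hij))⟩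

def appendEmbedding (h : Injective (uncurry (pick a b))) : Fin 6 ↪ Fin v :=
  ⟨Fin.append a b, injective_append_of_injective_pick h⟩

variable (h : Injective (uncurry (pick a b)))
include h

theorem appendEmbedding_pick (t : Fin 3) (x : Bool) :
    appendEmbedding h (pick (Fin.castAdd 3) (Fin.natAdd 3) t x) = pick a b t x := by
  cases x
  exacts [Fin.append_left a b t, Fin.append_right a b t]

theorem cycTrade_eq_comp :
    cycTrade a b =
      cycTrade (appendEmbedding h ∘ Fin.castAdd 3) (appendEmbedding h ∘ Fin.natAdd 3) :=
  congrArg₂ _ (funext fun t => (Fin.append_left a b t).symm)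
    (funext fun t => (Fin.append_right a b t).symm)

theorem isTrade_cycTrade : isTrade v (cycTrade a b) := by
  rw [cycTrade_eq_comp h]
  exact isTrade_of_apply_map _ isTrade_cycTrade_castAdd_natAdd (cycTrade_comp_apply_map _ _ _)
    fun B hB => cycTrade_comp_of_notMem_range _ _ _ hB

theorem cycTrade_eq_zero {B : Finset (Fin v)} {y : Fin v} (hy : y ∈ B)
    (hy' : ∀ t x, pick a b t x ≠ y) : cycTrade a b B = 0 := by
  rw [cycTrade_eq_comp h]
  refine cycTrade_comp_of_notMem_range _ _ _ ?_
  rintro ⟨C, rfl⟩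
  obtain ⟨i, -, rfl⟩ := mem_map.mp hy
  obtain ⟨t, x, rfl⟩ := exists_pick_castAdd_natAdd_eq i
  exact hy' t x (appendEmbedding_pick h t x).symm

theorem cycTrade_apply_map (C : Finset (Fin 6)) :
    cycTrade a b (C.map (appendEmbedding h)) = cycTrade (Fin.castAdd 3) (Fin.natAdd 3) C := by
  rw [cycTrade_eq_comp h, cycTrade_comp_apply_map]

theorem cycTrade_transversal {u w p : Fin 3} (huw : u ≠ w) (hup : u ≠ p) (hwp : w ≠ p)
    (x y z : Bool) :
    cycTrade a b {pick a b u x, pick a b w y, pick a b p z} = 1 ∨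
      cycTrade a b {pick a b u x, pick a b w y, pick a b p z} = -1 := by
  simp only [← appendEmbedding_pick h, ← map_singleton, ← map_insert, cycTrade_apply_map h]
  exact cycTrade_castAdd_natAdd_transversal u w p huw hup hwp x y z

theorem cycTrade_pair {u w p : Fin 3} (huw : u ≠ w) (hup : u ≠ p) (hwp : w ≠ p) (z : Bool) :
    cycTrade a b {pick a b u false, pick a b u true, pick a b w z} =
      -(ltSign u w * ltSign u p * ltSign w p) := by
  simp only [← appendEmbedding_pick h, ← map_singleton, ← map_insert, cycTrade_apply_map h]
  exact cycTrade_castAdd_natAdd_pair u w p huw hup hwp z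

end SixPoints

section Classes

variable {m v : ℕ} {a b : Fin m → Fin v}

theorem Function.Injective.pick_comp (hpick : Injective (uncurry (pick a b))) {α : Fin 3 → Fin m}
    (hα : Injective α) : Injective (uncurry (pick (a ∘ α) (b ∘ α))) := by
  rintro ⟨t, x⟩ ⟨t', x'⟩ h
  obtain ⟨htt', rfl⟩ := Prod.mk.inj (@hpick (α t, x) (α t', x') h)
  rw [hα htt']

theorem card_eq_three_cases (hpick : Surjective (uncurry (pick a b))) {B : Finset (Fin v)}
    (hB : #B = 3) :
    (∃ i j k x y z, i ≠ j ∧ i ≠ k ∧ j ≠ k ∧ B = {pick a b i x, pick a b j y, pick a b k z}) ∨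
      ∃ j k z, j ≠ k ∧ B = {pick a b j false, pick a b j true, pick a b k z} := by
  obtain ⟨p, q, r, hpq, hpr, hqr, rfl⟩ := card_eq_three.mp hB
  obtain ⟨⟨i, x⟩, rfl⟩ := hpick p
  obtain ⟨⟨j, y⟩, rfl⟩ := hpick q
  obtain ⟨⟨k, z⟩, rfl⟩ := hpick r
  simp only [uncurry_apply_pair] at *
  have pair {i x y} (w) (hxy : pick a b i x ≠ pick a b i y) :
      ({pick a b i x, pick a b i y, w} : Finset (Fin v)) =
        {pick a b i false, pick a b i true, w} := by
    cases x <;> cases y <;> first | exact absurd rfl hxy | rfl | exact insert_comm _ _ _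
  have no_three {i x y z} (hxy : pick a b i x ≠ pick a b i y) (hxz : pick a b i x ≠ pick a b i z)
      (hyz : pick a b i y ≠ pick a b i z) : False := by
    cases x <;> cases y <;> cases z <;> simp_all
  by_cases hij : i = j
  · subst hij
    exact .inr ⟨i, k, z, fun hik => by subst hik; exact no_three hpq hpr hqr, pair _ hpq⟩
  by_cases hik : i = k
  · subst hik
    refine .inr ⟨i, j, y, hij, ?_⟩
    rw [pair_comm (pick a b j y), pair _ hpr]
  by_cases hjk : j = k
  · subst hjk
    refine .inr ⟨j, i, x, Ne.symm hij, ?_⟩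
    rw [insert_comm, pair_comm (pick a b i x), pair _ hqr]
  exact .inl ⟨i, j, k, x, y, z, hij, hik, hjk, rfl⟩

end Classes

/-- `𝒯_{α₀α₁α₂}` for `s = {α₀ < α₁ < α₂}`, and `0` when `#s ≠ 3`. -/
def cycTradeOn {m v : ℕ} (a b : Fin m → Fin v) (s : Finset (Fin m)) : Finset (Fin v) → ℤ :=
  if h : #s = 3 then cycTrade (a ∘ s.orderEmbOfFin h) (b ∘ s.orderEmbOfFin h) else 0

theorem exists_orderEmbOfFin_eq {m k : ℕ} {s : Finset (Fin m)} (hs : #s = k) {c : Fin m}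
    (hc : c ∈ s) : ∃ t, s.orderEmbOfFin hs t = c := by
  rwa [← Set.mem_range, range_orderEmbOfFin]

section CycTradeOn

variable {m v : ℕ} {a b : Fin m → Fin v} (hpick : Injective (uncurry (pick a b)))
include hpick

theorem isTrade_cycTradeOn {s : Finset (Fin m)} (hs : #s = 3) : isTrade v (cycTradeOn a b s) := by
  rw [cycTradeOn, dif_pos hs]
  exact isTrade_cycTrade (hpick.pick_comp (s.orderEmbOfFin hs).injective)

theorem cycTradeOn_eq_zero {s : Finset (Fin m)} {c : Fin m} (hc : c ∉ s) {x : Bool}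
    {B : Finset (Fin v)} (hB : pick a b c x ∈ B) : cycTradeOn a b s B = 0 := by
  unfold cycTradeOn
  split_ifs with hs
  · refine cycTrade_eq_zero (hpick.pick_comp (s.orderEmbOfFin hs).injective) hB fun t y hty => ?_
    obtain ⟨rfl, -⟩ := Prod.mk.inj (@hpick (s.orderEmbOfFin hs t, y) (c, x) hty)
    exact hc (s.orderEmbOfFin_mem hs t)
  · rfl

theorem cycTradeOn_transversal {i j k : Fin m} (hij : i ≠ j) (hik : i ≠ k) (hjk : j ≠ k)
    (x y z : Bool) :
    cycTradeOn a b {i, j, k} {pick a b i x, pick a b j y, pick a b k z} = 1 ∨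
      cycTradeOn a b {i, j, k} {pick a b i x, pick a b j y, pick a b k z} = -1 := by
  have hs : #{i, j, k} = 3 := card_eq_three.2 ⟨i, j, k, hij, hik, hjk, rfl⟩
  obtain ⟨u, hu⟩ := exists_orderEmbOfFin_eq hs (by simp : i ∈ _)
  obtain ⟨w, hw⟩ := exists_orderEmbOfFin_eq hs (by simp : j ∈ _)
  obtain ⟨p, hp⟩ := exists_orderEmbOfFin_eq hs (by simp : k ∈ _)
  rw [cycTradeOn, dif_pos hs]
  generalize orderEmbOfFin _ hs = α at hu hw hp ⊢
  subst hu hw hp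
  exact cycTrade_transversal (hpick.pick_comp α.injective) (α.injective.ne_iff.1 hij)
    (α.injective.ne_iff.1 hik) (α.injective.ne_iff.1 hjk) x y z

theorem cycTradeOn_pair {j k l : Fin m} (hjk : j ≠ k) (hjl : j ≠ l) (hkl : k ≠ l) (z : Bool) :
    cycTradeOn a b {j, k, l} {pick a b j false, pick a b j true, pick a b k z} =
      -(ltSign j k * ltSign j l * ltSign k l) := by
  have hs : #{j, k, l} = 3 := card_eq_three.2 ⟨j, k, l, hjk, hjl, hkl, rfl⟩
  obtain ⟨u, hu⟩ := exists_orderEmbOfFin_eq hs (by simp : j ∈ _)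
  obtain ⟨w, hw⟩ := exists_orderEmbOfFin_eq hs (by simp : k ∈ _)
  obtain ⟨p, hp⟩ := exists_orderEmbOfFin_eq hs (by simp : l ∈ _)
  rw [cycTradeOn, dif_pos hs]
  generalize orderEmbOfFin _ hs = α at hu hw hp ⊢
  subst hu hw hp
  simp only [α.strictMono.ltSign_eq]
  exact cycTrade_pair (hpick.pick_comp α.injective) (α.injective.ne_iff.1 hjk)
    (α.injective.ne_iff.1 hjl) (α.injective.ne_iff.1 hkl) z

end CycTradeOn

theorem sum_powersetCard_three_eq_sum_sdiff {ι M : Type*} [Fintype ι] [DecidableEq ι]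
    [AddCommMonoid M] {F : Finset ι → M} {j k : ι} (hjk : j ≠ k)
    (hF : ∀ s, #s = 3 → ¬(j ∈ s ∧ k ∈ s) → F s = 0) :
    ∑ s ∈ univ.powersetCard 3, F s = ∑ l ∈ univ \ {j, k}, F {j, k, l} := by
  have hinj : Set.InjOn (fun l => ({j, k, l} : Finset ι)) ↑(univ \ {j, k}) := by
    intro l hl l' _ hll'
    have : l ∈ ({j, k, l'} : Finset ι) := by
      rw [← show ({j, k, l} : Finset ι) = {j, k, l'} from hll']
      simp
    simp_all
  rw [← sum_image hinj]
  refine (sum_subset (fun s hs => ?_) fun s hs hs' => hF s (mem_powersetCard_univ.1 hs) ?_).symm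
  · obtain ⟨l, hl, rfl⟩ := mem_image.1 hs
    simp only [mem_sdiff, mem_univ, mem_insert, mem_singleton, not_or, true_and] at hl
    exact mem_powersetCard_univ.2 (card_eq_three.2 ⟨j, k, l, hjk, Ne.symm hl.1, Ne.symm hl.2, rfl⟩)
  · rintro ⟨hj, hk⟩
    have hsub : {j, k} ⊆ s := by simp [insert_subset_iff, hj, hk]
    obtain ⟨l, hl⟩ := card_eq_one.1 (by
      rw [card_sdiff_of_subset hsub, mem_powersetCard_univ.1 hs, card_pair hjk] :
        #(s \ {j, k}) = 1)
    refine hs' (mem_image.2 ⟨l, ?_, ?_⟩)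
    · simpa using (mem_sdiff.1 (hl ▸ mem_singleton_self l : l ∈ s \ {j, k})).2
    · rw [← union_sdiff_of_subset hsub, hl]
      ext
      simp

theorem sum_sdiff_neg_one_pow_mul_ltSign {m : ℕ} (hm : Odd m) {j k : Fin m} (hjk : j ≠ k) :
    ∑ l ∈ univ \ {j, k}, (-1 : ℤ) ^ (l : ℕ) * (ltSign j l * ltSign k l) = 1 := by
  wlog hlt : j < k generalizing j k
  · rw [pair_comm]
    simp_rw [mul_comm (ltSign j _)]
    exact this hjk.symm (lt_of_le_of_ne (not_lt.1 hlt) hjk.symm)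
  have two_mul_geom (n : ℕ) : 2 * ∑ i ∈ range n, (-1 : ℤ) ^ i = 1 - (-1) ^ n := by
    rw [neg_one_geom_sum]
    rcases Nat.even_or_odd n with h | h <;> simp [h, h.neg_one_pow, Nat.not_even_iff_odd]
  have hterm (l : Fin m) : (-1 : ℤ) ^ (l : ℕ) * (ltSign j l * ltSign k l) =
      (-1) ^ (l : ℕ) - 2 * if (j : ℕ) < l ∧ (l : ℕ) < k + 1 then (-1) ^ (l : ℕ) else 0 := by
    simp only [ltSign, Fin.lt_def]
    split_ifs <;> omega
  have hIco : (range m).filter (fun l => (j : ℕ) < l ∧ l < k + 1) =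
      Ico ((j : ℕ) + 1) ((k : ℕ) + 1) := by
    ext
    simp only [mem_filter, mem_range, mem_Ico]
    omega
  rw [sum_sdiff_eq_sub (subset_univ _), sum_pair hjk, sum_congr rfl fun l _ => hterm l,
    sum_sub_distrib, ← mul_sum, Fin.sum_univ_eq_sum_range (fun l => (-1 : ℤ) ^ l),
    Fin.sum_univ_eq_sum_range (fun l => if (j : ℕ) < l ∧ l < k + 1 then (-1 : ℤ) ^ l else 0),
    ← sum_filter, hIco, sum_Ico_eq_sub _ (by omega)]
  simp only [ltSign, lt_irrefl, hlt, not_lt.2 hlt.le, if_true, if_false]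
  have h₁ : ∑ i ∈ range m, (-1 : ℤ) ^ i = 1 := by simp [neg_one_geom_sum, Nat.not_even_iff_odd.2 hm]
  have h₂ := two_mul_geom (k + 1)
  have h₃ := two_mul_geom (j + 1)
  linear_combination h₁ - h₂ + h₃

def v10Trade {m v : ℕ} (a b : Fin m → Fin v) (B : Finset (Fin v)) : ℤ :=
  ∑ s ∈ (univ : Finset (Fin m)).powersetCard 3, (-1) ^ (∑ i ∈ s, (i : ℕ)) * cycTradeOn a b s B

section V10Trade

variable {m v : ℕ} {a b : Fin m → Fin v}

theorem isTrade_v10Trade (hpick : Injective (uncurry (pick a b))) : isTrade v (v10Trade a b) :=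
  isTrade_sum (f := cycTradeOn a b) _ _ fun _ hs =>
    isTrade_cycTradeOn hpick (mem_powersetCard_univ.1 hs)

theorem v10Trade_transversal (hpick : Injective (uncurry (pick a b))) {i j k : Fin m}
    (hij : i ≠ j) (hik : i ≠ k) (hjk : j ≠ k) (x y z : Bool) :
    v10Trade a b {pick a b i x, pick a b j y, pick a b k z} = 1 ∨
      v10Trade a b {pick a b i x, pick a b j y, pick a b k z} = -1 := by
  have hs : #{i, j, k} = 3 := card_eq_three.2 ⟨i, j, k, hij, hik, hjk, rfl⟩
  rw [v10Trade, sum_eq_single_of_mem _ (mem_powersetCard_univ.2 hs) fun s hs' hne => ?_]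
  · rcases neg_one_pow_eq_or ℤ (∑ c ∈ {i, j, k}, (c : ℕ)) with h | h <;>
      rcases cycTradeOn_transversal hpick hij hik hjk x y z with h' | h' <;> simp [h, h']
  · obtain ⟨c, hc, hcs⟩ := not_subset.1 fun hsub => hne
      (eq_of_subset_of_card_le hsub (by rw [mem_powersetCard_univ.1 hs', hs])).symm
    simp only [mem_insert, mem_singleton] at hc
    rcases hc with rfl | rfl | rfl
    · rw [cycTradeOn_eq_zero hpick hcs (by simp : pick a b c x ∈ _), mul_zero]
    · rw [cycTradeOn_eq_zero hpick hcs (by simp : pick a b c y ∈ _), mul_zero]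
    · rw [cycTradeOn_eq_zero hpick hcs (by simp : pick a b c z ∈ _), mul_zero]

theorem v10Trade_pair (hm : Odd m) (hpick : Injective (uncurry (pick a b))) {j k : Fin m}
    (hjk : j ≠ k) (z : Bool) :
    v10Trade a b {pick a b j false, pick a b j true, pick a b k z} =
      -((-1) ^ ((j : ℕ) + k) * ltSign j k) := by
  rw [v10Trade, sum_powersetCard_three_eq_sum_sdiff hjk fun s _ hs => ?_]
  · calc _ = ∑ l ∈ univ \ {j, k}, -((-1) ^ ((j : ℕ) + k) * ltSign j k) *
          ((-1 : ℤ) ^ (l : ℕ) * (ltSign j l * ltSign k l)) := sum_congr rfl fun l hl => by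
          simp only [mem_sdiff, mem_univ, mem_insert, mem_singleton, not_or, true_and] at hl
          rw [cycTradeOn_pair hpick hjk (Ne.symm hl.1) (Ne.symm hl.2),
            sum_insert (by simp [hjk, Ne.symm hl.1]), sum_pair (Ne.symm hl.2), pow_add, pow_add]
          ring
      _ = _ := by rw [← mul_sum, sum_sdiff_neg_one_pow_mul_ltSign hm hjk, mul_one]
  · rcases not_and_or.1 hs with hj | hk
    · rw [cycTradeOn_eq_zero hpick hj (by simp : pick a b j false ∈ _), mul_zero]
    · rw [cycTradeOn_eq_zero hpick hk (by simp : pick a b k z ∈ _), mul_zero]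

theorem isHalving_v10Trade (hm : Odd m) (hpick : Bijective (uncurry (pick a b))) :
    isHalving v (v10Trade a b) := by
  have hval (B : Finset (Fin v)) (hB : #B = 3) : v10Trade a b B = 1 ∨ v10Trade a b B = -1 := by
    rcases card_eq_three_cases hpick.2 hB with ⟨i, j, k, x, y, z, hij, hik, hjk, rfl⟩ |
      ⟨j, k, z, hjk, rfl⟩
    · exact v10Trade_transversal hpick.1 hij hik hjk x y z
    · rw [v10Trade_pair hm hpick.1 hjk z, ltSign]
      rcases neg_one_pow_eq_or ℤ ((j : ℕ) + k) with h | h <;> split_ifs <;> simp [h]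
  refine ⟨isTrade_v10Trade hpick.1, fun B => ?_, hval⟩
  by_cases hB : #B = 3
  · rcases hval B hB with h | h <;> simp [h]
  · simp [(isTrade_v10Trade hpick.1).1 B hB]

end V10Trade

theorem bijective_pick_of_val {m v : ℕ} (hv : v = 2 * m) {a b : Fin m → Fin v}
    (ha : ∀ i : Fin m, (a i : ℕ) = i) (hb : ∀ i : Fin m, (b i : ℕ) = i + m) :
    Bijective (uncurry (pick a b)) := by
  refine (Fintype.bijective_iff_injective_and_card _).2 ⟨?_, by simp [hv, mul_comm]⟩
  rintro ⟨i, x⟩ ⟨j, y⟩ h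
  have hij := congrArg Fin.val h
  have := i.isLt
  have := j.isLt
  cases x <;> cases y <;> simp [pick, ha, hb, Fin.ext_iff] at hij ⊢ <;> omega

theorem V10_method_halving_general
    (n : ℕ) (v m : ℕ) (hv : v = 4 * n + 2) (hm : m = 2 * n + 1)
    (a b : Fin m → Fin v)
    (ha : ∀ i : Fin m, (a i : ℕ) = (i : ℕ)) (hb : ∀ i : Fin m, (b i : ℕ) = (i : ℕ) + m)
    (h : Finset (Fin v) → ℤ)
    (hh : h = fun B => ∑ s ∈ ((Finset.univ : Finset (Fin m)).powersetCard 3).attach,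
      (-1 : ℤ) ^ (∑ x ∈ s.1, (x : ℕ)) *
        (minimalTrade v
            (fun k => a ((s.1.orderIsoOfFin (Finset.mem_powersetCard.mp s.2).2) k))
            (fun k => b ((s.1.orderIsoOfFin (Finset.mem_powersetCard.mp s.2).2) k)) B +
          minimalTrade v
            (fun k => a ((s.1.orderIsoOfFin (Finset.mem_powersetCard.mp s.2).2) k))
            (fun k => b ((s.1.orderIsoOfFin (Finset.mem_powersetCard.mp s.2).2) (k + 1))) B -
          minimalTrade v
            (fun k => a ((s.1.orderIsoOfFin (Finset.mem_powersetCard.mp s.2).2) k))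
            (fun k => b ((s.1.orderIsoOfFin (Finset.mem_powersetCard.mp s.2).2) (k + 2))) B)) :
    isHalving v h := by
  have h_eq : h = v10Trade a b := by
    subst hh
    funext B
    rw [v10Trade, ← sum_attach ((univ : Finset (Fin m)).powersetCard 3)]
    refine sum_congr rfl fun s _ => ?_
    rw [cycTradeOn, dif_pos (mem_powersetCard.1 s.2).2]
    rfl
  rw [h_eq]
  exact isHalving_v10Trade ⟨n, hm⟩ (bijective_pick_of_val (by omega) ha hb)

/-- V10 method: For `n ≥ 1`, `v = 4n+2`, `m = 2n+1`, `aᵢ = i`, `bᵢ = i + m`,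
the sum over all 3-subsets `{α₀,α₁,α₂}` of `{0,…,2n}` (with `α₀ < α₁ < α₂`) of
`(-1)^(α₀+α₁+α₂) · 𝒯_{α₀α₁α₂}`, where
`𝒯_{α₀α₁α₂} = (a_{α₀}a_{α₁}a_{α₂} ; b_{α₀}b_{α₁}b_{α₂}) + (a_{α₀}a_{α₁}a_{α₂} ; b_{α₁}b_{α₂}b_{α₀})
- (a_{α₀}a_{α₁}a_{α₂} ; b_{α₂}b_{α₀}b_{α₁})`, is a `(2,3,4n+2)`-halving. -/
theorem V10_method_halving
    (n : ℕ) (hn : 1 ≤ n) (v m : ℕ) (hv : v = 4 * n + 2) (hm : m = 2 * n + 1)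
    (a b : Fin m → Fin v)
    (ha : ∀ i : Fin m, (a i : ℕ) = (i : ℕ)) (hb : ∀ i : Fin m, (b i : ℕ) = (i : ℕ) + m)
    (h : Finset (Fin v) → ℤ)
    (hh : h = fun B => ∑ s ∈ ((Finset.univ : Finset (Fin m)).powersetCard 3).attach,
      (-1 : ℤ) ^ (∑ x ∈ s.1, (x : ℕ)) *
        (minimalTrade v
            (fun k => a ((s.1.orderIsoOfFin (Finset.mem_powersetCard.mp s.2).2) k))
            (fun k => b ((s.1.orderIsoOfFin (Finset.mem_powersetCard.mp s.2).2) k)) B +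
          minimalTrade v
            (fun k => a ((s.1.orderIsoOfFin (Finset.mem_powersetCard.mp s.2).2) k))
            (fun k => b ((s.1.orderIsoOfFin (Finset.mem_powersetCard.mp s.2).2) (k + 1))) B -
          minimalTrade v
            (fun k => a ((s.1.orderIsoOfFin (Finset.mem_powersetCard.mp s.2).2) k))
            (fun k => b ((s.1.orderIsoOfFin (Finset.mem_powersetCard.mp s.2).2) (k + 2))) B)) :
    isHalving v h :=
  V10_method_halving_general n v m hv hm a b ha hb h hh
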